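/- Let n ≥ 2 be an integer and ℓ_1, …, ℓ_n ∈ ℝ. The operators L_{i,j} on real-valued functions on ℤ^n satisfy the Kohno–Drinfeld commutation relations: (a) [L_{i,j}, L_{k,l}] = 0 whenever i, j, k, l ∈ {1,…,n} are distinct, and (b) [L_{i,j}, L_{i,k} + L_{j,k}] = 0 whenever i, j, k ∈ {1,…,n} are distinct, where [A,B] = AB − BA. -/
import Mathlib


open Finset

/-- The operator `L_{i,j}` for distinct `i, j ∈ {1,…,n}`:
`(L_{i,j}f)(x) = x_j(x_i-ℓ_i)(f(x+e_i-e_j)-f(x)) + x_i(x_j-ℓ_j)(f(x+e_j-e_i)-f(x))`. -/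
def Lop (n : ℕ) (ℓ : Fin n → ℝ) (i j : Fin n) (f : (Fin n → ℤ) → ℝ) :
    (Fin n → ℤ) → ℝ := fun x =>
  (x j : ℝ) * ((x i : ℝ) - ℓ i) * (f (x + Pi.single i 1 - Pi.single j 1) - f x) +
    (x i : ℝ) * ((x j : ℝ) - ℓ j) * (f (x + Pi.single j 1 - Pi.single i 1) - f x)

set_option maxHeartbeats 2000000 in
/-- The Kohno–Drinfeld relations: `[L_{i,j}, L_{k,l}] = 0` for distinct `i,j,k,l`, and
`[L_{i,j}, L_{i,k} + L_{j,k}] = 0` for distinct `i,j,k`. -/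
theorem stmt9 (n : ℕ) (hn : 2 ≤ n) (ℓ : Fin n → ℝ) :
    (∀ i j k l : Fin n, i ≠ j → i ≠ k → i ≠ l → j ≠ k → j ≠ l → k ≠ l →
      ∀ f : (Fin n → ℤ) → ℝ,
        Lop n ℓ i j (Lop n ℓ k l f) = Lop n ℓ k l (Lop n ℓ i j f)) ∧
    (∀ i j k : Fin n, i ≠ j → i ≠ k → j ≠ k →
      ∀ f : (Fin n → ℤ) → ℝ,
        Lop n ℓ i j (Lop n ℓ i k f + Lop n ℓ j k f) =
          Lop n ℓ i k (Lop n ℓ i j f) + Lop n ℓ j k (Lop n ℓ i j f)) := by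
  constructor
  · intro i j k l hij hik hil hjk hjl hkl f
    funext x
    simp only [Lop, Pi.add_apply, Pi.sub_apply, Pi.single_eq_same,
      Pi.single_eq_of_ne hij, Pi.single_eq_of_ne hij.symm, Pi.single_eq_of_ne hik,
      Pi.single_eq_of_ne hik.symm, Pi.single_eq_of_ne hil, Pi.single_eq_of_ne hil.symm,
      Pi.single_eq_of_ne hjk, Pi.single_eq_of_ne hjk.symm, Pi.single_eq_of_ne hjl,
      Pi.single_eq_of_ne hjl.symm, Pi.single_eq_of_ne hkl, Pi.single_eq_of_ne hkl.symm]
    ring_nf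
  · intro i j k hij hik hjk f
    funext x
    simp only [Lop, Pi.add_apply, Pi.sub_apply, Pi.single_eq_same,
      Pi.single_eq_of_ne hij, Pi.single_eq_of_ne hij.symm, Pi.single_eq_of_ne hik,
      Pi.single_eq_of_ne hik.symm, Pi.single_eq_of_ne hjk, Pi.single_eq_of_ne hjk.symm]
    ring_nf
    push_cast
    ring
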